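/- Let π₁ : X₁ → Y and π₂ : X₂ → Y be holomorphic submersions, X ⊆ X₁ × X₂ the fiber product, and pr_j : X → X_j the projections. Let (E₁, h₁) and (E₂, h₂) be Hermitian holomorphic vector bundles over X₁ and X₂ respectively, and set (E, h) = (pr₁*E₁ ⊗ pr₂*E₂, pr₁*h₁ ⊗ pr₂*h₂) on X. If (E₁, h₁) and (E₂, h₂) are Nakano semipositive (resp. positive), then (E, h) is Nakano semipositive (resp. positive). -/
import Mathlib


noncomputable def NakanoForm {n : ℕ} {ι : Type*} [Fintype ι]
    (c : Fin n → Fin n → ι → ι → ℂ) (u : Fin n → ι → ℂ) : ℂ :=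
  ∑ j, ∑ k, ∑ a, ∑ b, c j k a b * u j a * star (u k b)

def IsHermitianArray {n : ℕ} {ι : Type*} (c : Fin n → Fin n → ι → ι → ℂ) : Prop :=
  ∀ j k a b, star (c j k a b) = c k j b a

def NakanoSemipos {n : ℕ} {ι : Type*} [Fintype ι]
    (c : Fin n → Fin n → ι → ι → ℂ) : Prop :=
  ∀ u : Fin n → ι → ℂ, 0 ≤ (NakanoForm c u).re

def NakanoPos {n : ℕ} {ι : Type*} [Fintype ι]
    (c : Fin n → Fin n → ι → ι → ℂ) : Prop :=
  ∀ u : Fin n → ι → ℂ, u ≠ 0 → 0 < (NakanoForm c u).re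

/-- Pullback of a curvature array along a tangent map `P` (the differential of a
holomorphic map, expressed as a matrix in local coordinates). -/
noncomputable def pullbackCurvature {n n' : ℕ} {ι : Type*}
    (P : Matrix (Fin n') (Fin n) ℂ) (c : Fin n' → Fin n' → ι → ι → ℂ) :
    Fin n → Fin n → ι → ι → ℂ :=
  fun j k a b => ∑ j', ∑ k', P j' j * star (P k' k) * c j' k' a b

noncomputable def tensorCurvature {n r₁ r₂ : ℕ}
    (c₁ : Fin n → Fin n → Fin r₁ → Fin r₁ → ℂ)
    (c₂ : Fin n → Fin n → Fin r₂ → Fin r₂ → ℂ) :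
    Fin n → Fin n → (Fin r₁ × Fin r₂) → (Fin r₁ × Fin r₂) → ℂ :=
  fun j k a b =>
    c₁ j k a.1 b.1 * (if a.2 = b.2 then 1 else 0) +
      (if a.1 = b.1 then 1 else 0) * c₂ j k a.2 b.2

private lemma pullback_form {n n' : ℕ} {ι : Type*} [Fintype ι]
    (P : Matrix (Fin n') (Fin n) ℂ) (c : Fin n' → Fin n' → ι → ι → ℂ)
    (v : Fin n → ι → ℂ) :
    NakanoForm (pullbackCurvature P c) v
      = NakanoForm c (fun j' a => ∑ j, P j' j * v j a) := by
  unfold NakanoForm pullbackCurvature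
  simp only [Finset.sum_mul, Finset.mul_sum, star_sum, star_mul']
  have h1 : (∑ x : Fin n × Fin n × ι × ι × Fin n' × Fin n',
      P x.2.2.2.2.1 x.1 * star (P x.2.2.2.2.2 x.2.1) * c x.2.2.2.2.1 x.2.2.2.2.2 x.2.2.1 x.2.2.2.1
        * v x.1 x.2.2.1 * star (v x.2.1 x.2.2.2.1))
      = ∑ x : Fin n, ∑ x_1 : Fin n, ∑ x_2 : ι, ∑ x_3 : ι, ∑ x_4 : Fin n', ∑ i : Fin n',
          P x_4 x * star (P i x_1) * c x_4 i x_2 x_3 * v x x_2 * star (v x_1 x_3) := by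
    simp only [Fintype.sum_prod_type]
  have h2 : (∑ y : Fin n' × Fin n' × ι × ι × Fin n × Fin n,
      c y.1 y.2.1 y.2.2.1 y.2.2.2.1 * (P y.1 y.2.2.2.2.2 * v y.2.2.2.2.2 y.2.2.1)
        * (star (P y.2.1 y.2.2.2.2.1) * star (v y.2.2.2.2.1 y.2.2.2.1)))
      = ∑ x : Fin n', ∑ x_1 : Fin n', ∑ x_2 : ι, ∑ x_3 : ι, ∑ x_4 : Fin n, ∑ i : Fin n,
          c x x_1 x_2 x_3 * (P x i * v i x_2) * (star (P x_1 x_4) * star (v x_4 x_3)) := by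
    simp only [Fintype.sum_prod_type]
  rw [← h1, ← h2]
  exact Fintype.sum_equiv
    ⟨fun x => (x.2.2.2.2.1, x.2.2.2.2.2, x.2.2.1, x.2.2.2.1, x.2.1, x.1),
     fun y => (y.2.2.2.2.2, y.2.2.2.2.1, y.2.2.1, y.2.2.2.1, y.1, y.2.1),
     fun _ => rfl, fun _ => rfl⟩ _ _ (fun x => by dsimp; ring)

private lemma tensor_form {n r₁ r₂ : ℕ}
    (c₁ : Fin n → Fin n → Fin r₁ → Fin r₁ → ℂ)
    (c₂ : Fin n → Fin n → Fin r₂ → Fin r₂ → ℂ)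
    (u : Fin n → (Fin r₁ × Fin r₂) → ℂ) :
    NakanoForm (tensorCurvature c₁ c₂) u
      = (∑ q : Fin r₂, NakanoForm c₁ (fun j a => u j (a, q)))
        + ∑ p : Fin r₁, NakanoForm c₂ (fun j b => u j (p, b)) := by
  unfold NakanoForm tensorCurvature
  simp only [add_mul, Finset.sum_add_distrib, Fintype.sum_prod_type, mul_ite, ite_mul,
    mul_one, one_mul, mul_zero, zero_mul, Finset.sum_ite_irrel, Finset.sum_const_zero,
    Finset.sum_ite_eq, Finset.mem_univ, if_true]
  congr 1
  · have h1 : (∑ x : Fin n × Fin n × Fin r₁ × Fin r₂ × Fin r₁,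
        c₁ x.1 x.2.1 x.2.2.1 x.2.2.2.2 * u x.1 (x.2.2.1, x.2.2.2.1)
          * star (u x.2.1 (x.2.2.2.2, x.2.2.2.1)))
        = ∑ x : Fin n, ∑ x_1 : Fin n, ∑ x_2 : Fin r₁, ∑ x_3 : Fin r₂, ∑ x_4 : Fin r₁,
            c₁ x x_1 x_2 x_4 * u x (x_2, x_3) * star (u x_1 (x_4, x_3)) := by
      simp only [Fintype.sum_prod_type]
    have h2 : (∑ y : Fin r₂ × Fin n × Fin n × Fin r₁ × Fin r₁,
        c₁ y.2.1 y.2.2.1 y.2.2.2.1 y.2.2.2.2 * u y.2.1 (y.2.2.2.1, y.1)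
          * star (u y.2.2.1 (y.2.2.2.2, y.1)))
        = ∑ x : Fin r₂, ∑ x_1 : Fin n, ∑ x_2 : Fin n, ∑ x_3 : Fin r₁, ∑ x_4 : Fin r₁,
            c₁ x_1 x_2 x_3 x_4 * u x_1 (x_3, x) * star (u x_2 (x_4, x)) := by
      simp only [Fintype.sum_prod_type]
    rw [← h1, ← h2]
    exact Fintype.sum_equiv
      ⟨fun x => (x.2.2.2.1, x.1, x.2.1, x.2.2.1, x.2.2.2.2),
       fun y => (y.2.1, y.2.2.1, y.2.2.2.1, y.1, y.2.2.2.2),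
       fun _ => rfl, fun _ => rfl⟩ _ _ (fun x => rfl)
  · have h1 : (∑ x : Fin n × Fin n × Fin r₁ × Fin r₂ × Fin r₂,
        c₂ x.1 x.2.1 x.2.2.2.1 x.2.2.2.2 * u x.1 (x.2.2.1, x.2.2.2.1)
          * star (u x.2.1 (x.2.2.1, x.2.2.2.2)))
        = ∑ x : Fin n, ∑ x_1 : Fin n, ∑ x_2 : Fin r₁, ∑ x_3 : Fin r₂, ∑ x_4 : Fin r₂,
            c₂ x x_1 x_3 x_4 * u x (x_2, x_3) * star (u x_1 (x_2, x_4)) := by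
      simp only [Fintype.sum_prod_type]
    have h2 : (∑ y : Fin r₁ × Fin n × Fin n × Fin r₂ × Fin r₂,
        c₂ y.2.1 y.2.2.1 y.2.2.2.1 y.2.2.2.2 * u y.2.1 (y.1, y.2.2.2.1)
          * star (u y.2.2.1 (y.1, y.2.2.2.2)))
        = ∑ x : Fin r₁, ∑ x_1 : Fin n, ∑ x_2 : Fin n, ∑ x_3 : Fin r₂, ∑ x_4 : Fin r₂,
            c₂ x_1 x_2 x_3 x_4 * u x_1 (x, x_3) * star (u x_2 (x, x_4)) := by
      simp only [Fintype.sum_prod_type]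
    rw [← h1, ← h2]
    exact Fintype.sum_equiv
      ⟨fun x => (x.2.2.1, x.1, x.2.1, x.2.2.2.1, x.2.2.2.2),
       fun y => (y.2.1, y.2.2.1, y.1, y.2.2.2.1, y.2.2.2.2),
       fun _ => rfl, fun _ => rfl⟩ _ _ (fun x => rfl)

private lemma nakanoPos_re_nonneg {n : ℕ} {ι : Type*} [Fintype ι]
    {c : Fin n → Fin n → ι → ι → ℂ} (h : NakanoPos c) (u : Fin n → ι → ℂ) :
    0 ≤ (NakanoForm c u).re := by
  by_cases hu : u = 0
  · subst hu; simp [NakanoForm]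
  · exact (h u hu).le

/-- let `π₁ : X₁ → Y`, `π₂ : X₂ → Y` be holomorphic submersions and
`X = X₁ ×_Y X₂` the fiber product, with projections `pr₁, pr₂` whose differentials at a
point `x ∈ X` are given in coordinates by matrices `P₁ x`, `P₂ x` (jointly injective on
the tangent space of `X`, as `X ⊆ X₁ × X₂`).  If Hermitian bundles `(E₁,h₁)` on `X₁` and
`(E₂,h₂)` on `X₂` are Nakano semipositive (resp. positive), then
`(pr₁*E₁ ⊗ pr₂*E₂, pr₁*h₁ ⊗ pr₂*h₂)` is Nakano semipositive (resp. positive) on `X`,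
its curvature array at `x` being
`tensorCurvature (pullback (P₁ x) (c₁ (pr₁ x))) (pullback (P₂ x) (c₂ (pr₂ x)))`. -/
theorem nakano_fiber_product_tensor
    {Y X₁ X₂ : Type*} (π₁ : X₁ → Y) (π₂ : X₂ → Y)
    {n n₁ n₂ r₁ r₂ : ℕ}
    (c₁ : X₁ → Fin n₁ → Fin n₁ → Fin r₁ → Fin r₁ → ℂ)
    (c₂ : X₂ → Fin n₂ → Fin n₂ → Fin r₂ → Fin r₂ → ℂ)
    (h₁ : ∀ x, IsHermitianArray (c₁ x)) (h₂ : ∀ x, IsHermitianArray (c₂ x))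
    (P₁ : {p : X₁ × X₂ // π₁ p.1 = π₂ p.2} → Matrix (Fin n₁) (Fin n) ℂ)
    (P₂ : {p : X₁ × X₂ // π₁ p.1 = π₂ p.2} → Matrix (Fin n₂) (Fin n) ℂ) :
    ((∀ x, NakanoSemipos (c₁ x)) → (∀ x, NakanoSemipos (c₂ x)) →
      ∀ x : {p : X₁ × X₂ // π₁ p.1 = π₂ p.2},
        NakanoSemipos (tensorCurvature
          (pullbackCurvature (P₁ x) (c₁ x.1.1)) (pullbackCurvature (P₂ x) (c₂ x.1.2)))) ∧
    ((∀ x : {p : X₁ × X₂ // π₁ p.1 = π₂ p.2}, ∀ v : Fin n → ℂ,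
        (P₁ x).mulVec v = 0 → (P₂ x).mulVec v = 0 → v = 0) →
      (∀ x, NakanoPos (c₁ x)) → (∀ x, NakanoPos (c₂ x)) →
      ∀ x : {p : X₁ × X₂ // π₁ p.1 = π₂ p.2},
        NakanoPos (tensorCurvature
          (pullbackCurvature (P₁ x) (c₁ x.1.1)) (pullbackCurvature (P₂ x) (c₂ x.1.2)))) := by
  
  constructor
  · intro H1 H2 x u
    simp only [tensor_form, pullback_form, Complex.add_re, Complex.re_sum]
    exact add_nonneg (Finset.sum_nonneg fun q _ => H1 _ _)
      (Finset.sum_nonneg fun p _ => H2 _ _)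
  · intro hinj H1 H2 x u hu
    simp only [NakanoPos, tensor_form, pullback_form, Complex.add_re, Complex.re_sum]
    obtain ⟨j₀, hj₀⟩ := Function.ne_iff.mp hu
    obtain ⟨⟨p₀, q₀⟩, hpq⟩ := Function.ne_iff.mp hj₀
    set v : Fin n → ℂ := fun j => u j (p₀, q₀) with hv
    have hvne : v ≠ 0 := fun h0 => hpq (congrFun h0 j₀)
    have key : (P₁ x).mulVec v ≠ 0 ∨ (P₂ x).mulVec v ≠ 0 := by
      by_contra h
      push_neg at h
      exact hvne (hinj x v h.1 h.2)
    rcases key with h | h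
    · refine add_pos_of_pos_of_nonneg ?_ (Finset.sum_nonneg fun p _ =>
        nakanoPos_re_nonneg (H2 x.1.2) _)
      refine Finset.sum_pos' (fun q _ => nakanoPos_re_nonneg (H1 x.1.1) _)
        ⟨q₀, Finset.mem_univ _, ?_⟩
      refine H1 x.1.1 _ fun h0 => ?_
      obtain ⟨j₁, hj₁⟩ := Function.ne_iff.mp h
      apply hj₁
      have := congrFun (congrFun h0 j₁) p₀
      simpa [Matrix.mulVec, dotProduct, hv] using this
    · refine add_pos_of_nonneg_of_pos (Finset.sum_nonneg fun q _ =>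
        nakanoPos_re_nonneg (H1 x.1.1) _) ?_
      refine Finset.sum_pos' (fun p _ => nakanoPos_re_nonneg (H2 x.1.2) _)
        ⟨p₀, Finset.mem_univ _, ?_⟩
      refine H2 x.1.2 _ fun h0 => ?_
      obtain ⟨j₁, hj₁⟩ := Function.ne_iff.mp h
      apply hj₁
      have := congrFun (congrFun h0 j₁) q₀
      simpa [Matrix.mulVec, dotProduct, hv] using this
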